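/- There exists a compatible left-symmetric conformal algebra structure on a Lie conformal algebra R if and only if there exists a representation ρ of R on some C[∂]-module V and a bijective O-operator T: V → R associated with ρ. (In particular, if T is a bijective O-operator, then a_λ b := T(ρ(a)_λ T^{-1}(b)) defines a compatible left-symmetric conformal algebra structure on R.) -/

import Mathlib

/-!
Everything rests on one identity: by sesquilinearity `∂` acts as `-λ-μ` inside `(·)_{λ+μ} c`,
so substituting `λ ↦ -λ-∂` in the left factor and then acting at `λ+μ` exchanges `λ` and `μ`
(`actAtSum_csubst`).

If `S` is a compatible left-symmetric structure, left multiplication `a ↦ a *_λ ·` is a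
representation of `L` on itself: through compatibility and the identity above, the
representation axiom becomes left-symmetry. The identity map is then an `𝒪`-operator.

Conversely an `𝒪`-operator `T` makes `u ∘_λ v = ρ(T u)_λ v` left-symmetric on `V`: the
`𝒪`-operator identity and the identity above turn left-symmetry into the representation axiom.
When `T` is bijective, transporting `∘` along `T` gives `a *_λ b = T(ρ(a)_λ T⁻¹ b)`, and the
`𝒪`-operator identity says precisely that it is compatible with `L`.
-/

open Finsupp

noncomputable section

/-- Coefficient of `λ^k` of the substitution `μ ↦ -λ-∂` applied to the polynomial
`Σₙ μ^n • (f n)` with coefficients in `A` (with `∂` acting on the coefficients). -/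
def csubst {A : Type} [AddCommGroup A] [Module ℂ A]
    (D : Module.End ℂ A) (f : ℕ →₀ A) (k : ℕ) : A :=
  f.sum fun n c => ((-1 : ℂ) ^ n * (n.choose k : ℂ)) • (D ^ (n - k)) c

/-- Coefficient of `λ^n μ^m` of `(a_λ b)_{λ+μ} c`, for a λ-product `m₁` on `A`
and a λ-action `m₂` of `A` on `V`. -/
def comp2 {A V : Type} [AddCommGroup A] [Module ℂ A] [AddCommGroup V] [Module ℂ V]
    (m₁ : A →ₗ[ℂ] A →ₗ[ℂ] (ℕ →₀ A)) (m₂ : A →ₗ[ℂ] V →ₗ[ℂ] (ℕ →₀ V))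
    (a b : A) (c : V) (n m : ℕ) : V :=
  ∑ i ∈ Finset.range (n + 1),
    (((m + n - i).choose (n - i) : ℕ) : ℂ) • m₂ (m₁ a b i) c (m + n - i)

/-- A conformal algebra: a `ℂ[∂]`-module with a sesquilinear λ-product,
encoded coefficientwise: `mul a b n` is the coefficient of `λ^n` in `a_λ b`. -/
structure ConfAlg (A : Type) [AddCommGroup A] [Module ℂ A] where
  D : Module.End ℂ A
  mul : A →ₗ[ℂ] A →ₗ[ℂ] (ℕ →₀ A)
  sesq_left_zero : ∀ a b, mul (D a) b 0 = 0
  sesq_left : ∀ a b n, mul (D a) b (n + 1) = - mul a b n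
  sesq_right_zero : ∀ a b, mul a (D b) 0 = D (mul a b 0)
  sesq_right : ∀ a b n, mul a (D b) (n + 1) = D (mul a b (n + 1)) + mul a b n

/-- A Lie conformal algebra: skew-symmetry `[a_λ b] = -[b_{-λ-∂} a]` and the
Jacobi identity `[a_λ[b_μ c]] = [[a_λ b]_{λ+μ} c] + [b_μ[a_λ c]]`, coefficientwise. -/
structure LieConfAlg (A : Type) [AddCommGroup A] [Module ℂ A] extends ConfAlg A where
  skew : ∀ a b k, mul a b k = - csubst D (mul b a) k
  jacobi : ∀ a b c n m,
    mul a (mul b c m) n = comp2 mul mul a b c n m + mul b (mul a c n) m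

/-- A left-symmetric conformal algebra:
`(a_λ b)_{λ+μ} c - a_λ(b_μ c) = (b_μ a)_{λ+μ} c - b_μ(a_λ c)`, coefficientwise. -/
structure LSConfAlg (A : Type) [AddCommGroup A] [Module ℂ A] extends ConfAlg A where
  lsym : ∀ a b c n m,
    comp2 mul mul a b c n m - mul a (mul b c m) n
      = comp2 mul mul b a c m n - mul b (mul a c n) m

/-- A representation of a Lie conformal algebra `L` on a `ℂ[∂]`-module `V`. -/
structure ConfRep {A : Type} [AddCommGroup A] [Module ℂ A]
    (L : LieConfAlg A) (V : Type) [AddCommGroup V] [Module ℂ V] where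
  DV : Module.End ℂ V
  act : A →ₗ[ℂ] V →ₗ[ℂ] (ℕ →₀ V)
  sesq_left_zero : ∀ a v, act (L.D a) v 0 = 0
  sesq_left : ∀ a v n, act (L.D a) v (n + 1) = - act a v n
  sesq_right_zero : ∀ a v, act a (DV v) 0 = DV (act a v 0)
  sesq_right : ∀ a v n, act a (DV v) (n + 1) = DV (act a v (n + 1)) + act a v n
  rep : ∀ a b v n m,
    comp2 L.mul act a b v n m = act a (act b v m) n - act b (act a v n) m

/-- `T : V → R` is an `𝒪`-operator associated with the representation `ρ`:
it is a `ℂ[∂]`-module map and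
`[T(u)_λ T(v)] = T(ρ(T u)_λ v - ρ(T v)_{-λ-∂} u)`, coefficientwise. -/
def IsOOperator {A V : Type} [AddCommGroup A] [Module ℂ A] [AddCommGroup V] [Module ℂ V]
    {L : LieConfAlg A} (ρ : ConfRep L V) (T : V →ₗ[ℂ] A) : Prop :=
  (∀ v, T (ρ.DV v) = L.D (T v)) ∧
  ∀ u v k, L.mul (T u) (T v) k = T (ρ.act (T u) v k - csubst ρ.DV (ρ.act (T v) u) k)

/-- Data of a representation of `L` together with a linear map into `L`'s carrier. -/
structure OOpData {A : Type} [AddCommGroup A] [Module ℂ A] (L : LieConfAlg A) where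
  V : Type
  [iV : AddCommGroup V]
  [mV : Module ℂ V]
  ρ : ConfRep L V
  T : V →ₗ[ℂ] A

attribute [instance] OOpData.iV OOpData.mV

theorem sum_range_neg_one_pow_mul_choose_mul_choose {R : Type*} [CommRing R] (j n N : ℕ)
    (h : j ≤ N) :
    ∑ i ∈ Finset.range (n + 1), (-1 : R) ^ i * j.choose i * (N - i).choose (n - i)
      = (N - j).choose n := by
  induction j generalizing n N with
  | zero => simp [Finset.sum_range_succ']
  | succ j ih =>
    cases n with
    | zero => simp
    | succ n =>
      have ih₁ := ih n (N - 1) (by omega)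
      have ih₂ := ih (n + 1) N (by omega)
      have pascal : ((N - j).choose (n + 1) : R)
          = (N - (j + 1)).choose n + (N - (j + 1)).choose (n + 1) := by
        rw [show N - j = N - (j + 1) + 1 by omega, Nat.choose_succ_succ', Nat.cast_add]
      rw [Finset.sum_range_succ'] at ih₂ ⊢
      simp only [Nat.choose_succ_succ', Nat.cast_add, Nat.sub_sub, Nat.add_sub_add_right,
        show N - 1 - j = N - (j + 1) by omega, pow_succ, mul_neg_one, neg_mul, mul_add, add_mul,
        Finset.sum_add_distrib, Finset.sum_neg_distrib, Nat.add_comm 1, Nat.choose_zero_right,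
        Nat.sub_zero] at ih₁ ih₂ ⊢
      linear_combination ih₂ - ih₁ + pascal

section Substitution

variable {A V : Type} [AddCommGroup A] [Module ℂ A] [AddCommGroup V] [Module ℂ V]

theorem csubst_zero (D : Module.End ℂ A) (k : ℕ) : csubst D 0 k = 0 :=
  Finsupp.sum_zero_index

theorem csubst_add (D : Module.End ℂ A) (f g : ℕ →₀ A) (k : ℕ) :
    csubst D (f + g) k = csubst D f k + csubst D g k :=
  Finsupp.sum_add_index' (fun _ => by simp) fun _ _ _ => by simp [smul_add]

theorem csubst_single (D : Module.End ℂ A) (j : ℕ) (x : A) (k : ℕ) :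
    csubst D (single j x) k = ((-1 : ℂ) ^ j * (j.choose k : ℂ)) • (D ^ (j - k)) x :=
  Finsupp.sum_single_index (by simp)

theorem map_csubst {D : Module.End ℂ A} {DV : Module.End ℂ V} {T : V →ₗ[ℂ] A}
    (hT : ∀ v, T (DV v) = D (T v)) (f : ℕ →₀ V) (k : ℕ) :
    T (csubst DV f k) = csubst D (mapRange T (map_zero T) f) k := by
  have hpow := Module.End.commute_pow_left_of_commute (LinearMap.ext hT).symm
  rw [csubst, csubst, Finsupp.sum_mapRange_index (fun _ => by simp), map_finsuppSum]
  refine Finsupp.sum_congr fun n _ => ?_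
  rw [map_smul, ← LinearMap.comp_apply, ← hpow, LinearMap.comp_apply]

end Substitution

section ActAtSum

variable {A V : Type} [AddCommGroup A] [Module ℂ A] [AddCommGroup V] [Module ℂ V]
  (m₂ : A →ₗ[ℂ] V →ₗ[ℂ] (ℕ →₀ V))

/-- The coefficient of `λ^n μ^m` in `f(λ)_{λ+μ} c`, where `f(λ) = Σᵢ λ^i f i`. -/
def actAtSum (f : ℕ → A) (c : V) (n m : ℕ) : V :=
  ∑ i ∈ Finset.range (n + 1), (((m + n - i).choose (n - i) : ℕ) : ℂ) • m₂ (f i) c (m + n - i)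

theorem comp2_eq_actAtSum (m₁ : A →ₗ[ℂ] A →ₗ[ℂ] (ℕ →₀ A)) (a b : A) (c : V) (n m : ℕ) :
    comp2 m₁ m₂ a b c n m = actAtSum m₂ (m₁ a b) c n m :=
  rfl

theorem actAtSum_add (f g : ℕ → A) (c : V) (n m : ℕ) :
    actAtSum m₂ (f + g) c n m = actAtSum m₂ f c n m + actAtSum m₂ g c n m := by
  simp only [actAtSum, Pi.add_apply, map_add, LinearMap.add_apply, Finsupp.add_apply, smul_add,
    Finset.sum_add_distrib]

theorem actAtSum_sub (f g : ℕ → A) (c : V) (n m : ℕ) :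
    actAtSum m₂ (f - g) c n m = actAtSum m₂ f c n m - actAtSum m₂ g c n m := by
  simp only [actAtSum, Pi.sub_apply, map_sub, LinearMap.sub_apply, Finsupp.sub_apply, smul_sub,
    Finset.sum_sub_distrib]

theorem actAtSum_single (j : ℕ) (x : A) (c : V) (n m : ℕ) :
    actAtSum m₂ (single j x) c n m
      = if j ≤ n then (((m + n - j).choose (n - j) : ℕ) : ℂ) • m₂ x c (m + n - j) else 0 := by
  unfold actAtSum
  split_ifs with hj
  · rw [Finset.sum_eq_single j (fun i _ hij => by simp [single_eq_of_ne hij])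
      (fun hj' => absurd (Finset.mem_range_succ_iff.2 hj) hj'), single_eq_same]
  · refine Finset.sum_eq_zero fun i hi => ?_
    rw [single_eq_of_ne (by rw [Finset.mem_range] at hi; omega), map_zero, LinearMap.zero_apply, Finsupp.zero_apply, smul_zero]

end ActAtSum

section Sesquilinear

variable {A V : Type} [AddCommGroup A] [Module ℂ A] [AddCommGroup V] [Module ℂ V]
  {D : Module.End ℂ A} {m₂ : A →ₗ[ℂ] V →ₗ[ℂ] (ℕ →₀ V)}

theorem act_pow_apply_of_lt (h0 : ∀ a v, m₂ (D a) v 0 = 0)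
    (h1 : ∀ a v n, m₂ (D a) v (n + 1) = - m₂ a v n) {p k : ℕ} (hk : k < p) (a : A) (v : V) :
    m₂ ((D ^ p) a) v k = 0 := by
  induction p generalizing k with
  | zero => omega
  | succ p ih =>
    rw [pow_succ', Module.End.mul_apply]
    cases k with
    | zero => exact h0 _ _
    | succ k => rw [h1, ih (by omega), neg_zero]

theorem act_pow_apply_add (h1 : ∀ a v n, m₂ (D a) v (n + 1) = - m₂ a v n)
    (p k : ℕ) (a : A) (v : V) :
    m₂ ((D ^ p) a) v (k + p) = (-1 : ℂ) ^ p • m₂ a v k := by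
  induction p with
  | zero => simp
  | succ p ih =>
    rw [pow_succ', Module.End.mul_apply, ← add_assoc, h1, ih, pow_succ, mul_smul, neg_one_smul,
      smul_neg]

theorem actAtSum_csubst_single (h0 : ∀ a v, m₂ (D a) v 0 = 0)
    (h1 : ∀ a v n, m₂ (D a) v (n + 1) = - m₂ a v n) (j : ℕ) (x : A) (c : V) (n m : ℕ) :
    actAtSum m₂ (csubst D (single j x)) c n m = actAtSum m₂ (single j x) c m n := by
  rw [actAtSum_single, Nat.add_comm n m]
  by_cases hj : j ≤ m + n
  · have hterm : ∀ i ∈ Finset.range (n + 1),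
        (((m + n - i).choose (n - i) : ℕ) : ℂ) • m₂ (csubst D (single j x) i) c (m + n - i)
          = ((-1 : ℂ) ^ i * j.choose i * (m + n - i).choose (n - i)) • m₂ x c (m + n - j) := by
      intro i _
      rw [csubst_single, map_smul, LinearMap.smul_apply, Finsupp.smul_apply, smul_smul]
      rcases le_or_gt i j with hij | hij
      · obtain ⟨d, rfl⟩ := Nat.exists_eq_add_of_le hij
        have hpow : m₂ ((D ^ d) x) c (m + n - i) = (-1 : ℂ) ^ d • m₂ x c (m + n - (i + d)) := by
          rw [← act_pow_apply_add h1]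
          congr 1
          omega
        rw [Nat.add_sub_cancel_left, hpow, smul_smul]
        have hsign : (-1 : ℂ) ^ (i + d) * (-1) ^ d = (-1) ^ i := by
          rw [pow_add, mul_assoc, ← pow_add, ← two_mul, pow_mul, neg_one_sq, one_pow, mul_one]
        rw [← hsign]
        congr 1
        ring
      · simp [Nat.choose_eq_zero_of_lt hij]
    rw [actAtSum, Finset.sum_congr rfl hterm, ← Finset.sum_smul,
      sum_range_neg_one_pow_mul_choose_mul_choose j n (m + n) hj]
    split_ifs with hjm
    · obtain ⟨k, rfl⟩ := Nat.exists_eq_add_of_le hjm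
      rw [show j + k + n - j = k + n by omega, Nat.add_sub_cancel_left, Nat.choose_symm_add]
    · rw [Nat.choose_eq_zero_of_lt (by omega), Nat.cast_zero, zero_smul]
  · rw [if_neg (by omega)]
    refine Finset.sum_eq_zero fun i hi => ?_
    rw [Finset.mem_range] at hi
    rw [csubst_single, map_smul, LinearMap.smul_apply, Finsupp.smul_apply,
      act_pow_apply_of_lt h0 h1 (by omega), smul_zero, smul_zero]

theorem actAtSum_csubst (h0 : ∀ a v, m₂ (D a) v 0 = 0)
    (h1 : ∀ a v n, m₂ (D a) v (n + 1) = - m₂ a v n) (f : ℕ →₀ A) (c : V) (n m : ℕ) :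
    actAtSum m₂ (csubst D f) c n m = actAtSum m₂ f c m n := by
  induction f using Finsupp.induction_linear with
  | zero => simp [actAtSum, csubst_zero]
  | add f g hf hg =>
    rw [show csubst D (f + g) = csubst D f + csubst D g from funext (csubst_add D f g),
      Finsupp.coe_add, actAtSum_add, actAtSum_add, hf, hg]
  | single j x => exact actAtSum_csubst_single h0 h1 j x c n m

end Sesquilinear

section Compatible

variable {A : Type} [AddCommGroup A] [Module ℂ A] {L : LieConfAlg A} {S : LSConfAlg A}

def IsCompatible (L : LieConfAlg A) (S : LSConfAlg A) : Prop :=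
  S.D = L.D ∧ ∀ a b k, L.mul a b k = S.mul a b k - csubst S.D (S.mul b a) k

theorem IsCompatible.comp2_eq (h : IsCompatible L S) (a b c : A) (n m : ℕ) :
    comp2 L.mul S.mul a b c n m = S.mul a (S.mul b c m) n - S.mul b (S.mul a c n) m := by
  have hL : ⇑(L.mul a b) = ⇑(S.mul a b) - csubst S.D (S.mul b a) := funext (h.2 a b)
  rw [comp2_eq_actAtSum, hL, actAtSum_sub, actAtSum_csubst S.sesq_left_zero S.sesq_left,
    ← comp2_eq_actAtSum, ← comp2_eq_actAtSum]
  exact sub_eq_sub_iff_sub_eq_sub.1 (S.lsym a b c n m)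

def IsCompatible.leftRep (h : IsCompatible L S) : ConfRep L A where
  DV := S.D
  act := S.mul
  sesq_left_zero := h.1 ▸ S.sesq_left_zero
  sesq_left := h.1 ▸ S.sesq_left
  sesq_right_zero := S.sesq_right_zero
  sesq_right := S.sesq_right
  rep := h.comp2_eq

theorem IsCompatible.isOOperator_id (h : IsCompatible L S) :
    IsOOperator h.leftRep LinearMap.id :=
  ⟨LinearMap.congr_fun h.1, h.2⟩

end Compatible

section Transport

variable {A V : Type} [AddCommGroup A] [Module ℂ A] [AddCommGroup V] [Module ℂ V]

def transportMul (e : V ≃ₗ[ℂ] A) :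
    (V →ₗ[ℂ] V →ₗ[ℂ] (ℕ →₀ V)) ≃ₗ[ℂ] (A →ₗ[ℂ] A →ₗ[ℂ] (ℕ →₀ A)) :=
  e.arrowCongr (e.arrowCongr (mapRange.linearEquiv e))

theorem transportMul_apply (e : V ≃ₗ[ℂ] A) (μ : V →ₗ[ℂ] V →ₗ[ℂ] (ℕ →₀ V)) (a b : A) :
    transportMul e μ a b = mapRange e (map_zero e) (μ (e.symm a) (e.symm b)) := by
  simp [transportMul]

theorem comp2_transportMul (e : V ≃ₗ[ℂ] A) (μ : V →ₗ[ℂ] V →ₗ[ℂ] (ℕ →₀ V)) (a b c : A)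
    (n m : ℕ) :
    comp2 (transportMul e μ) (transportMul e μ) a b c n m
      = e (comp2 μ μ (e.symm a) (e.symm b) (e.symm c) n m) := by
  simp [comp2, transportMul_apply]

def LSConfAlg.transport (S : LSConfAlg V) (e : V ≃ₗ[ℂ] A) (D : Module.End ℂ A)
    (hD : ∀ v, e (S.D v) = D (e v)) : LSConfAlg A := by
  have hD' : ∀ a, e.symm (D a) = S.D (e.symm a) := fun a => by
    rw [e.symm_apply_eq, hD, e.apply_symm_apply]
  exact
  { D := D
    mul := transportMul e S.mul
    sesq_left_zero := fun a b => by simp [transportMul_apply, hD', S.sesq_left_zero]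
    sesq_left := fun a b n => by simp [transportMul_apply, hD', S.sesq_left]
    sesq_right_zero := fun a b => by
      simp [transportMul_apply, hD', S.sesq_right_zero, hD]
    sesq_right := fun a b n => by simp [transportMul_apply, hD', S.sesq_right, hD]
    lsym := fun a b c n m => by
      simp only [comp2_transportMul, transportMul_apply, mapRange_apply, e.symm_apply_apply,
        ← map_sub, S.lsym] }

theorem LSConfAlg.transport_mul_apply (S : LSConfAlg V) (e : V ≃ₗ[ℂ] A) (D : Module.End ℂ A)
    (hD : ∀ v, e (S.D v) = D (e v)) (u v : V) :
    (S.transport e D hD).mul (e u) (e v) = mapRange e (map_zero e) (S.mul u v) := by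
  simp [LSConfAlg.transport, transportMul_apply]

end Transport

namespace IsOOperator

variable {A V : Type} [AddCommGroup A] [Module ℂ A] [AddCommGroup V] [Module ℂ V]
  {L : LieConfAlg A} {ρ : ConfRep L V} {T : V →ₗ[ℂ] A}

theorem map_DV (hT : IsOOperator ρ T) (v : V) : T (ρ.DV v) = L.D (T v) :=
  hT.1 v

theorem mul_map_map (hT : IsOOperator ρ T) (u v : V) (k : ℕ) :
    L.mul (T u) (T v) k = T (ρ.act (T u) v k - csubst ρ.DV (ρ.act (T v) u) k) :=
  hT.2 u v k

theorem act_map_DV_zero (hT : IsOOperator ρ T) (u v : V) : ρ.act (T (ρ.DV u)) v 0 = 0 := by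
  rw [hT.map_DV]
  exact ρ.sesq_left_zero _ _

theorem act_map_DV_succ (hT : IsOOperator ρ T) (u v : V) (n : ℕ) :
    ρ.act (T (ρ.DV u)) v (n + 1) = - ρ.act (T u) v n := by
  rw [hT.map_DV]
  exact ρ.sesq_left _ _ _

theorem comp2_act_comp (hT : IsOOperator ρ T) (u v w : V) (n m : ℕ) :
    comp2 (ρ.act ∘ₗ T) (ρ.act ∘ₗ T) u v w n m
      = comp2 L.mul ρ.act (T u) (T v) w n m + comp2 (ρ.act ∘ₗ T) (ρ.act ∘ₗ T) v u w m n := by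
  have hTuv : (fun i => T (ρ.act (T u) v i))
      = ⇑(L.mul (T u) (T v)) + fun i => T (csubst ρ.DV (ρ.act (T v) u) i) := by
    ext i
    rw [Pi.add_apply, hT.mul_map_map, map_sub, sub_add_cancel]
  calc comp2 (ρ.act ∘ₗ T) (ρ.act ∘ₗ T) u v w n m
      = actAtSum ρ.act (fun i => T (ρ.act (T u) v i)) w n m := rfl
    _ = comp2 L.mul ρ.act (T u) (T v) w n m
          + actAtSum (ρ.act ∘ₗ T) (csubst ρ.DV (ρ.act (T v) u)) w n m := by
      rw [hTuv, actAtSum_add]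
      rfl
    _ = _ := by
      rw [actAtSum_csubst hT.act_map_DV_zero hT.act_map_DV_succ]
      rfl

def lsConfAlg (hT : IsOOperator ρ T) : LSConfAlg V where
  D := ρ.DV
  mul := ρ.act ∘ₗ T
  sesq_left_zero := hT.act_map_DV_zero
  sesq_left := hT.act_map_DV_succ
  sesq_right_zero u := ρ.sesq_right_zero (T u)
  sesq_right u := ρ.sesq_right (T u)
  lsym u v w n m := by
    rw [hT.comp2_act_comp, LinearMap.comp_apply, ρ.rep]
    simp only [LinearMap.comp_apply]
    abel

theorem isCompatible_transport (hT : IsOOperator ρ T) (hbij : Function.Bijective T) :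
    IsCompatible L (hT.lsConfAlg.transport (LinearEquiv.ofBijective T hbij) L.D hT.map_DV) := by
  refine ⟨rfl, fun a b k => ?_⟩
  obtain ⟨u, rfl⟩ := (LinearEquiv.ofBijective T hbij).surjective a
  obtain ⟨v, rfl⟩ := (LinearEquiv.ofBijective T hbij).surjective b
  rw [hT.lsConfAlg.transport_mul_apply _ _ hT.map_DV u v,
    hT.lsConfAlg.transport_mul_apply _ _ hT.map_DV v u, mapRange_apply]
  change L.mul (T u) (T v) k
    = T (ρ.act (T u) v k) - csubst L.D (mapRange T (map_zero T) (ρ.act (T v) u)) k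
  rw [hT.mul_map_map, map_sub, map_csubst hT.map_DV]

end IsOOperator

/-- a Lie conformal algebra `R` admits a compatible left-symmetric
conformal algebra structure iff there is a bijective `𝒪`-operator `T : V → R`
associated with some representation `ρ` of `R`. -/
theorem compatible_iff_bijective_ooperator {A : Type} [AddCommGroup A] [Module ℂ A]
    (L : LieConfAlg A) :
    (∃ S : LSConfAlg A, S.D = L.D ∧
        ∀ a b k, L.mul a b k = S.mul a b k - csubst S.D (S.mul b a) k)
    ↔ ∃ d : OOpData L, IsOOperator d.ρ d.T ∧ Function.Bijective d.T := by
  constructor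
  · rintro ⟨S, hS : IsCompatible L S⟩
    exact ⟨⟨A, hS.leftRep, LinearMap.id⟩, hS.isOOperator_id, Function.bijective_id⟩
  · rintro ⟨d, hT, hbij⟩
    exact ⟨_, hT.isCompatible_transport hbij⟩
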